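/- Let π = (π_h)_{h ∈ H} be positive reals summing to 1, with π_0 the value at h = (0,...,0), and let π̃_h = π_h/(1-π_0) for h ∈ H*. For any ξ > 0, the equality ∏_{h ∈ H} π_h^{I_odd(h)} / ∏_{h ∈ H} π_h^{I_even(h)} = ξ holds if and only if π_0 = (Π̃_odd/Π̃_even)/(ξ + Π̃_odd/Π̃_even), where Π̃_odd = ∏_{h ∈ H*} π̃_h^{I_odd(h)} and Π̃_even = ∏_{h ∈ H*} π̃_h^{I_even(h)}. -/

import Mathlib

open Finset

/-- `H* = {0,1}^K \ {(0,...,0)}` as a finset. -/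
def Hstar (K : ℕ) : Finset (Fin K → Bool) :=
  Finset.univ.filter (fun h => h ≠ (fun _ => false))

/-- `∏_{h ∈ s} p(h)^{I_odd(h)}`, where `I_odd(h) = I(∑_k h_k odd)`. -/
noncomputable def pOdd {K : ℕ} (s : Finset (Fin K → Bool)) (p : (Fin K → Bool) → ℝ) : ℝ :=
  ∏ h ∈ s, if Odd (∑ k, (h k).toNat) then p h else 1

/-- `∏_{h ∈ s} p(h)^{I_even(h)}`, where `I_even(h) = I(∑_k h_k even)`. -/
noncomputable def pEven {K : ℕ} (s : Finset (Fin K → Bool)) (p : (Fin K → Bool) → ℝ) : ℝ :=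
  ∏ h ∈ s, if Even (∑ k, (h k).toNat) then p h else 1

/-! Cell probabilities are scaled by `1/(1 - π₀)` when the zero cell is dropped. Since `H*` has
one odd cell more than even cells (odd and even cells are equinumerous in `H`, and `0` is even),
`Π̃_odd/Π̃_even = (Π_odd/Π_even) · π₀/(1 - π₀)`; the equivalence is then elementary algebra in
`π₀` and `ξ`. -/

section Parity

variable {ι : Type*} [Fintype ι] [DecidableEq ι]

theorem odd_sum_toNat_update_not_iff (h : ι → Bool) (i : ι) :
    Odd (∑ k, (Function.update h i (!h i) k).toNat) ↔ Even (∑ k, (h k).toNat) := by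
  have hrest : ∑ k ∈ univ.erase i, (Function.update h i (!h i) k).toNat =
      ∑ k ∈ univ.erase i, (h k).toNat :=
    sum_congr rfl fun k hk => by rw [Function.update_of_ne (ne_of_mem_erase hk)]
  rw [← add_sum_erase _ _ (mem_univ i), ← add_sum_erase _ _ (mem_univ i), hrest,
    Function.update_self]
  cases h i <;> simp [parity_simps]

theorem card_filter_odd_sum_toNat_eq_card_filter_even [Nonempty ι] :
    #{h : ι → Bool | Odd (∑ k, (h k).toNat)} = #{h : ι → Bool | Even (∑ k, (h k).toNat)} := by
  let i := Classical.arbitrary ι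
  let flip : (ι → Bool) → (ι → Bool) := fun h => Function.update h i (!h i)
  have flip_flip : ∀ h, flip (flip h) = h := fun h => by simp [flip]
  refine card_nbij' flip flip (fun h hh => ?_) (fun h hh => ?_) (fun h _ => flip_flip h)
    (fun h _ => flip_flip h)
  · simp only [coe_filter, mem_univ, true_and, Set.mem_ofPred_eq] at hh ⊢
    refine (odd_sum_toNat_update_not_iff (flip h) i).mp ?_
    change Odd (∑ k, (flip (flip h) k).toNat)
    rwa [flip_flip]
  · simp only [coe_filter, mem_univ, true_and, Set.mem_ofPred_eq] at hh ⊢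
    exact (odd_sum_toNat_update_not_iff h i).mpr hh

end Parity

section CellProducts

variable {K : ℕ}

theorem Hstar_eq_erase : Hstar K = univ.erase (fun _ => false) :=
  filter_ne' _ _

theorem pOdd_univ (p : (Fin K → Bool) → ℝ) : pOdd univ p = pOdd (Hstar K) p := by
  rw [pOdd, pOdd, Hstar_eq_erase, ← mul_prod_erase _ _ (mem_univ fun _ => false)]
  simp

theorem pEven_univ (p : (Fin K → Bool) → ℝ) :
    pEven univ p = p (fun _ => false) * pEven (Hstar K) p := by
  rw [pEven, pEven, Hstar_eq_erase, ← mul_prod_erase _ _ (mem_univ fun _ => false)]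
  simp

theorem pOdd_pos {s : Finset (Fin K → Bool)} {p : (Fin K → Bool) → ℝ} (hp : ∀ h, 0 < p h) :
    0 < pOdd s p :=
  prod_pos fun h _ => by split_ifs <;> simp [hp]

theorem pEven_pos {s : Finset (Fin K → Bool)} {p : (Fin K → Bool) → ℝ} (hp : ∀ h, 0 < p h) :
    0 < pEven s p :=
  prod_pos fun h _ => by split_ifs <;> simp [hp]

theorem pOdd_div_const (s : Finset (Fin K → Bool)) (p : (Fin K → Bool) → ℝ) (c : ℝ) :
    pOdd s (fun h => p h / c) = pOdd s p / c ^ #{h ∈ s | Odd (∑ k, (h k).toNat)} := by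
  simp only [pOdd, ← prod_filter, prod_div_distrib, prod_const]

theorem pEven_div_const (s : Finset (Fin K → Bool)) (p : (Fin K → Bool) → ℝ) (c : ℝ) :
    pEven s (fun h => p h / c) = pEven s p / c ^ #{h ∈ s | Even (∑ k, (h k).toNat)} := by
  simp only [pEven, ← prod_filter, prod_div_distrib, prod_const]

theorem card_Hstar_filter_odd (hK : 1 ≤ K) :
    #{h ∈ Hstar K | Odd (∑ k, (h k).toNat)} = #{h ∈ Hstar K | Even (∑ k, (h k).toNat)} + 1 := by
  have : Nonempty (Fin K) := ⟨⟨0, hK⟩⟩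
  have zero_even : (fun _ => false) ∈ ({h | Even (∑ k, (h k).toNat)} : Finset (Fin K → Bool)) := by
    simp
  have zero_not_odd :
      (fun _ => false) ∉ ({h | Odd (∑ k, (h k).toNat)} : Finset (Fin K → Bool)) := by
    simp
  rw [Hstar_eq_erase, filter_erase, filter_erase, erase_eq_of_notMem zero_not_odd,
    card_erase_of_mem zero_even, card_filter_odd_sum_toNat_eq_card_filter_even]
  have := card_pos.mpr ⟨_, zero_even⟩
  omega

theorem pOdd_div_pEven_Hstar_div_const (hK : 1 ≤ K) (p : (Fin K → Bool) → ℝ) {c : ℝ}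
    (hc : c ≠ 0) :
    pOdd (Hstar K) (fun h => p h / c) / pEven (Hstar K) (fun h => p h / c) =
      pOdd (Hstar K) p / pEven (Hstar K) p / c := by
  rw [pOdd_div_const, pEven_div_const, card_Hstar_filter_odd hK, pow_succ]
  field_simp

end CellProducts

theorem lt_one_of_sum_eq_one {α : Type*} [Fintype α] [Nontrivial α] {p : α → ℝ}
    (hp : ∀ a, 0 < p a) (hs : ∑ a, p a = 1) (a : α) : p a < 1 := by
  obtain ⟨b, hb⟩ := exists_ne a
  exact hs ▸ single_lt_sum hb (mem_univ a) (mem_univ b) (hp b) fun k _ _ => (hp k).le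

theorem div_eq_iff_eq_div_one_sub_div {r x ξ : ℝ} (hr : 0 ≤ r) (hx₀ : 0 < x) (hx₁ : x < 1)
    (hξ : 0 < ξ) :
    r / x = ξ ↔ x = r / (1 - x) / (ξ + r / (1 - x)) := by
  have h1x : 1 - x ≠ 0 := by linarith
  have hden : ξ + r / (1 - x) ≠ 0 := by positivity
  rw [div_eq_iff hx₀.ne', eq_div_iff hden]
  field_simp
  constructor
  · rintro rfl
    ring
  · intro h
    exact mul_left_cancel₀ h1x (by linear_combination -h)

/-- for positive cell probabilities `π` summing to one, with observed cell
probabilities `π̃_h = π_h/(1-π_0)`, and any `ξ > 0`: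
`Π_odd/Π_even = ξ ↔ π_0 = (Π̃_odd/Π̃_even)/(ξ + Π̃_odd/Π̃_even)`. -/
theorem stmt10 (K : ℕ) (hK : 1 ≤ K)
    (π : (Fin K → Bool) → ℝ) (hπ : ∀ h, 0 < π h) (hs : ∑ h, π h = 1)
    (tπ : (Fin K → Bool) → ℝ)
    (htπ : ∀ h, tπ h = π h / (1 - π (fun _ => false)))
    (ξ : ℝ) (hξ : 0 < ξ) :
    pOdd Finset.univ π / pEven Finset.univ π = ξ ↔
      π (fun _ => false) =
        (pOdd (Hstar K) tπ / pEven (Hstar K) tπ) /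
          (ξ + pOdd (Hstar K) tπ / pEven (Hstar K) tπ) := by
  have : Nonempty (Fin K) := ⟨⟨0, hK⟩⟩
  have hπ₁ : π (fun _ => false) < 1 := lt_one_of_sum_eq_one hπ hs _
  rw [funext htπ, pOdd_div_pEven_Hstar_div_const hK π (by linarith), pOdd_univ, pEven_univ,
    div_mul_eq_div_div_swap]
  exact div_eq_iff_eq_div_one_sub_div (div_pos (pOdd_pos hπ) (pEven_pos hπ)).le (hπ _) hπ₁ hξ
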